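/- Let p ∈ Q and let ξ ≠ η be elements of D_p, with π^p_ξ : (T_p)_{x_ξ} → (T_p)_{y_ξ} and π^p_η : (T_p)_{x_η} → (T_p)_{y_η}. Let x ∈ T_p satisfy x_ξ ≤ x and x_η ≤ x. Then there exist a condition q ≤ p and an ordinal α with ht(x) < α < α_q such that for every y ∈ T_q of height α with x <_q y, one has π^q_ξ(y) ≠ π^q_η(y). -/

import Mathlib

universe u

/-- The underlying data of a condition `p = (T_p, <_p, Π_p)` of the poset `Q`:
a set `tp` of countable ordinals carrying a strict order `lt` whose sets of
predecessors are well-ordered, together with a set `dp ⊆ ω₂` of indices and,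
for each index `ξ`, a map `pi ξ` (intended as the partial isomorphism
`π^p_ξ`). -/
structure QPre : Type (u + 1) where
  /-- The underlying set of the tree, a set of ordinals. -/
  tp : Set Ordinal.{u}
  /-- The tree order. -/
  lt : Ordinal.{u} → Ordinal.{u} → Prop
  /-- The index set of the isomorphisms. -/
  dp : Set Ordinal.{u}
  /-- The isomorphisms `π^p_ξ`, coded as total functions. -/
  pi : Ordinal.{u} → Ordinal.{u} → Ordinal.{u}
  lt_mem : ∀ x y, lt x y → x ∈ tp ∧ y ∈ tp
  wo : ∀ t, IsWellOrder {s : Ordinal.{u} // lt s t} (fun a b => lt a.1 b.1)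

/-- The height of `t` in the tree of the condition `p`: the order type of the
set of its `p.lt`-predecessors. -/
noncomputable def QPre.ht (p : QPre.{u}) (t : Ordinal.{u}) : Ordinal.{u + 1} :=
  @Ordinal.type {s : Ordinal.{u} // p.lt s t} (fun a b => p.lt a.1 b.1) (p.wo t)

/-- The height `α_p` of the tree of the condition `p`: the least ordinal `α`
such that the `α`-th level of the tree is empty. -/
noncomputable def QPre.alphap (p : QPre.{u}) : Ordinal.{u + 1} :=
  sInf {α | ∀ t ∈ p.tp, p.ht t ≠ α}

/-- The cone `(T_p)_x`: the set of elements of the tree comparable with `x`. -/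
def QPre.cone (p : QPre.{u}) (x t : Ordinal.{u}) : Prop :=
  t ∈ p.tp ∧ (p.lt t x ∨ t = x ∨ p.lt x t)

/-- `f` is a tree isomorphism from the cone `(T_p)_x` onto the cone
`(T_p)_y`. -/
def QPre.IsConeIso (p : QPre.{u}) (f : Ordinal.{u} → Ordinal.{u})
    (x y : Ordinal.{u}) : Prop :=
  (∀ t, p.cone x t → p.cone y (f t)) ∧
  (∀ s, p.cone y s → ∃ t, p.cone x t ∧ f t = s) ∧
  (∀ s t, p.cone x s → p.cone x t → f s = f t → s = t) ∧
  (∀ s t, p.cone x s → p.cone x t → (p.lt s t ↔ p.lt (f s) (f t)))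

/-- `p` is a condition of the poset `Q`: `T_p` is a countable subset of `ω₁`,
`<_p` is a (strict) tree order on `T_p` of height `α_p` which is normal (every
element is comparable with some element of every lower level), `D_p` is a
countable subset of `ω₂` and each `π^p_ξ` (`ξ ∈ D_p`) is a tree isomorphism
between two cones whose roots have the same height. -/
def IsQCond (p : QPre.{u}) : Prop :=
  p.tp ⊆ Set.Iio (Cardinal.aleph 1).ord ∧
  p.tp.Countable ∧
  (∀ x ∈ p.tp, ¬ p.lt x x) ∧
  (∀ x y z : Ordinal.{u}, p.lt x y → p.lt y z → p.lt x z) ∧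
  (∀ t ∈ p.tp, p.ht t < p.alphap) ∧
  (∀ t ∈ p.tp, ∀ β < p.alphap, ∃ s ∈ p.tp, p.ht s = β ∧
    (p.lt s t ∨ s = t ∨ p.lt t s)) ∧
  p.dp ⊆ Set.Iio (Cardinal.aleph 2).ord ∧
  p.dp.Countable ∧
  (∀ ξ ∈ p.dp, ∃ x ∈ p.tp, ∃ y ∈ p.tp, p.ht x = p.ht y ∧
    p.IsConeIso (p.pi ξ) x y)

/-- The order of the poset `Q`: `q ≤ p` iff `T_q` end-extends `T_p` (i.e.
`T_p` is exactly the set of elements of `T_q` of height `< α_p` and `<_p` is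
the restriction of `<_q`), `D_p ⊆ D_q`, and `π^q_ξ ↾ T_p = π^p_ξ` for every
`ξ ∈ D_p`. -/
def QLe (q p : QPre.{u}) : Prop :=
  p.tp = {t ∈ q.tp | q.ht t < p.alphap} ∧
  (∀ x y : Ordinal.{u}, x ∈ p.tp → y ∈ p.tp → (p.lt x y ↔ q.lt x y)) ∧
  p.dp ⊆ q.dp ∧
  (∀ ξ ∈ p.dp, ∀ t ∈ p.tp, q.pi ξ t = p.pi ξ t)

/-!
The condition `q` adds one level, of height `α = α_p`, on top of `T_p`. Since `T_p` is
countable, so is `α_p`; hence every node lies on a branch meeting all levels, and there is a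
countable family of such branches closed under the maps `π_ζ` and their inverses. Above each
branch `b` of the family put two new nodes `(b, 0)` and `(b, 1)` and extend `π_ζ` by
`(b, i) ↦ (π_ζ[b], i)`, except that `π_ξ` sends `(b, i)` to `(π_ξ[b], 1 - i)` when `x ∈ b`.
Closure of the family makes the extended maps cone isomorphisms again, and for a new node
`y = (b, i)` above `x` the nodes `π_ξ(y)` and `π_η(y)` differ in their second coordinate.
-/

open Set

def closureUnder {ι α : Type*} (F : ι → α → α) (S : Set α) : Set α :=
  ⋃ l : List ι, (fun a => l.foldr F a) '' S

section closureUnder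

variable {ι α : Type*} {F : ι → α → α} {S : Set α}

theorem subset_closureUnder : S ⊆ closureUnder F S :=
  fun a ha => mem_iUnion.2 ⟨[], a, ha, rfl⟩

theorem apply_mem_closureUnder (i : ι) {a : α} (ha : a ∈ closureUnder F S) :
    F i a ∈ closureUnder F S := by
  obtain ⟨l, b, hb, rfl⟩ := mem_iUnion.1 ha
  exact mem_iUnion.2 ⟨i :: l, b, hb, rfl⟩

theorem Set.Countable.closureUnder [Countable ι] (hS : S.Countable) :
    (closureUnder F S).Countable :=
  countable_iUnion fun _ => hS.image _

end closureUnder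

theorem exists_injOn_mapsTo_Iio_omega_one_diff {L : Type*} {E : Set L} (hE : E.Countable)
    {A : Set Ordinal.{u}} (hA : A.Countable) :
    ∃ node : L → Ordinal.{u}, E.InjOn node ∧
      MapsTo node E (Iio (Cardinal.aleph 1).ord \ A) := by
  classical
  have hinf : (Iio (Cardinal.aleph 1).ord \ A).Infinite := fun h => by
    have hle := Cardinal.le_aleph0_iff_set_countable.2
      ((h.countable.union hA).mono (subset_sdiff_union _ _))
    rw [Cardinal.mk_Iio_ordinal, Cardinal.card_ord, ← Cardinal.lift_aleph0.{u + 1, u},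
      Cardinal.lift_le] at hle
    exact hle.not_gt Cardinal.aleph0_lt_aleph_one
  obtain ⟨en, hen⟩ := Set.countable_iff_exists_injective.1 hE
  let em := hinf.natEmbedding
  refine ⟨fun l => if h : l ∈ E then (em (en ⟨l, h⟩)).1 else 0, fun a ha b hb hab => ?_,
    fun a ha => ?_⟩
  · simp only [dif_pos ha, dif_pos hb] at hab
    exact congrArg Subtype.val (hen (em.injective (Subtype.ext hab)))
  · simp only [dif_pos ha]
    exact (em _).2

theorem IsQCond.isTrans {p : QPre.{u}} (hp : IsQCond p) : IsTrans Ordinal.{u} p.lt :=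
  ⟨hp.2.2.2.1⟩

theorem IsQCond.ht_lt_alphap {p : QPre.{u}} (hp : IsQCond p) {t : Ordinal.{u}}
    (ht : t ∈ p.tp) : p.ht t < p.alphap :=
  hp.2.2.2.2.1 t ht

theorem IsQCond.tp_countable {p : QPre.{u}} (hp : IsQCond p) : p.tp.Countable := hp.2.1

theorem IsQCond.dp_countable {p : QPre.{u}} (hp : IsQCond p) : p.dp.Countable :=
  hp.2.2.2.2.2.2.2.1

namespace QPre

variable {p : QPre.{u}}

theorem lt_trichotomous_of_lt {t a b : Ordinal.{u}} (ha : p.lt a t) (hb : p.lt b t) :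
    p.lt a b ∨ a = b ∨ p.lt b a := by
  let _ := p.wo t
  rcases trichotomous_of (fun u v : {s // p.lt s t} => p.lt u.1 v.1) ⟨a, ha⟩ ⟨b, hb⟩ with
    h | h | h
  · exact Or.inl h
  · exact Or.inr (Or.inl (congrArg Subtype.val h))
  · exact Or.inr (Or.inr h)

theorem comparable_of_lt_or_eq {a b c : Ordinal.{u}} (ha : p.lt a c ∨ a = c)
    (hb : p.lt b c ∨ b = c) : p.lt a b ∨ a = b ∨ p.lt b a := by
  rcases ha with ha | rfl <;> rcases hb with hb | rfl
  exacts [lt_trichotomous_of_lt ha hb, Or.inl ha, Or.inr (Or.inr hb), Or.inr (Or.inl rfl)]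

def subrelIsoOfIff {P P' : Ordinal.{u} → Prop} {r r' : Ordinal.{u} → Ordinal.{u} → Prop}
    (hP : ∀ a, P a ↔ P' a) (hr : ∀ a b, P a → P b → (r a b ↔ r' a b)) :
    (fun (a b : {a // P a}) => r a.1 b.1) ≃r (fun (a b : {a // P' a}) => r' a.1 b.1) :=
  ⟨Equiv.subtypeEquivRight hP, fun {a b} => (hr a b a.2 b.2).symm⟩

section Trans

variable [IsTrans Ordinal.{u} p.lt]

theorem ht_eq_typein {a c : Ordinal.{u}} (h : p.lt a c) :
    p.ht a = @Ordinal.typein {s // p.lt s c} (fun u v => p.lt u.1 v.1) (p.wo c) ⟨a, h⟩ := by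
  let _ := p.wo c
  let _ := p.wo a
  rw [← Ordinal.type_subrel]
  exact Ordinal.type_eq.2 ⟨⟨⟨fun u => ⟨⟨u.1, trans_of p.lt u.2 h⟩, u.2⟩,
    fun v => ⟨v.1.1, v.2⟩, fun _ => rfl, fun _ => rfl⟩, Iff.rfl⟩⟩

theorem ht_lt_ht {a c : Ordinal.{u}} (h : p.lt a c) : p.ht a < p.ht c := by
  rw [ht_eq_typein h]
  let _ := p.wo c
  exact Ordinal.typein_lt_type _ _

theorem exists_lt_ht_eq {t : Ordinal.{u}} {β : Ordinal.{u + 1}} (hβ : β < p.ht t) :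
    ∃ s, p.lt s t ∧ p.ht s = β := by
  let _ := p.wo t
  obtain ⟨⟨s, hs⟩, h⟩ := Ordinal.typein_surj (fun (u v : {s // p.lt s t}) => p.lt u.1 v.1) hβ
  exact ⟨s, hs, (ht_eq_typein hs).trans h⟩

theorem eq_of_ht_eq {s t : Ordinal.{u}} (h : p.lt s t ∨ s = t ∨ p.lt t s)
    (hst : p.ht s = p.ht t) : s = t := by
  rcases h with h | h | h
  · exact absurd hst (ht_lt_ht h).ne
  · exact h
  · exact absurd hst (ht_lt_ht h).ne'

theorem lt_or_eq_trans {a b c : Ordinal.{u}} (hab : p.lt a b ∨ a = b)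
    (hbc : p.lt b c ∨ b = c) : p.lt a c ∨ a = c := by
  rcases hab with hab | rfl <;> rcases hbc with hbc | rfl
  exacts [Or.inl (trans_of p.lt hab hbc), Or.inl hab, Or.inl hbc, Or.inr rfl]

end Trans

theorem exists_ht_eq_of_lt_alphap {β : Ordinal.{u + 1}} (hβ : β < p.alphap) :
    ∃ t ∈ p.tp, p.ht t = β := by
  by_contra! h
  exact (csInf_le' (show β ∈ {α | ∀ t ∈ p.tp, p.ht t ≠ α} from h)).not_gt hβ

theorem countable_Iio_alphap (h : p.tp.Countable) : (Iio p.alphap).Countable :=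
  (h.image p.ht).mono fun _ hβ => exists_ht_eq_of_lt_alphap hβ

theorem alphap_eq_of_image_ht_eq {γ : Ordinal.{u + 1}} (h : p.ht '' p.tp = Iio γ) :
    p.alphap = γ := by
  have : {α | ∀ t ∈ p.tp, p.ht t ≠ α} = Ici γ := by
    rw [← compl_Iio, ← h]
    ext α
    simp
  rw [alphap, this, csInf_Ici]

theorem mem_of_cone {w t : Ordinal.{u}} (h : p.cone w t) : w ∈ p.tp := by
  rcases h.2 with h' | rfl | h'
  exacts [(p.lt_mem _ _ h').2, h.1, (p.lt_mem _ _ h').1]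

theorem cone_self {w : Ordinal.{u}} (hw : w ∈ p.tp) : p.cone w w := ⟨hw, Or.inr (Or.inl rfl)⟩

theorem cone_of_lt [IsTrans Ordinal.{u} p.lt] {w s t : Ordinal.{u}} (hst : p.lt s t)
    (hct : p.cone w t) : p.cone w s := by
  refine ⟨(p.lt_mem _ _ hst).1, ?_⟩
  rcases hct.2 with h | rfl | h
  · exact Or.inl (trans_of p.lt hst h)
  · exact Or.inl hst
  · exact lt_trichotomous_of_lt hst h

namespace IsConeIso

variable {f : Ordinal.{u} → Ordinal.{u}} {w z : Ordinal.{u}}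

theorem bijOn (hf : p.IsConeIso f w z) : BijOn f {t | p.cone w t} {t | p.cone z t} :=
  ⟨hf.1, fun a ha b hb => hf.2.2.1 a b ha hb, fun s hs => hf.2.1 s hs⟩

theorem lt_iff (hf : p.IsConeIso f w z) {s t : Ordinal.{u}} (hs : p.cone w s)
    (ht : p.cone w t) : p.lt s t ↔ p.lt (f s) (f t) :=
  hf.2.2.2 s t hs ht

theorem mem_left (hf : p.IsConeIso f w z) (hz : z ∈ p.tp) : w ∈ p.tp :=
  let ⟨_, ht, _⟩ := hf.bijOn.surjOn (cone_self hz)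
  mem_of_cone ht

theorem mem_right (hf : p.IsConeIso f w z) (hw : w ∈ p.tp) : z ∈ p.tp :=
  mem_of_cone (hf.bijOn.mapsTo (cone_self hw))

theorem ht_apply [IsTrans Ordinal.{u} p.lt] (hf : p.IsConeIso f w z) {t : Ordinal.{u}}
    (hct : p.cone w t) : p.ht (f t) = p.ht t := by
  have hft : p.cone z (f t) := hf.bijOn.mapsTo hct
  have hbij : Function.Bijective fun s : {s // p.lt s t} =>
      (⟨f s.1, (hf.lt_iff (cone_of_lt s.2 hct) hct).1 s.2⟩ : {s // p.lt s (f t)}) := by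
    refine ⟨fun a b hab => Subtype.ext <| hf.bijOn.injOn (cone_of_lt a.2 hct)
      (cone_of_lt b.2 hct) (congrArg Subtype.val hab), fun ⟨s, hs⟩ => ?_⟩
    obtain ⟨t', hct', rfl⟩ := hf.bijOn.surjOn (cone_of_lt hs hft)
    exact ⟨⟨t', (hf.lt_iff hct' hct).2 hs⟩, rfl⟩
  let _ := p.wo t
  let _ := p.wo (f t)
  exact (Ordinal.type_eq.2 ⟨⟨Equiv.ofBijective _ hbij, fun {a b} =>
    (hf.lt_iff (cone_of_lt a.2 hct) (cone_of_lt b.2 hct)).symm⟩⟩).symm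

end IsConeIso

structure IsBranch (p : QPre.{u}) (b : Set Ordinal.{u}) : Prop where
  subset : b ⊆ p.tp
  comparable : ∀ s ∈ b, ∀ t ∈ b, p.lt s t ∨ s = t ∨ p.lt t s
  mem_of_lt : ∀ t ∈ b, ∀ s, p.lt s t → s ∈ b
  exists_ht_eq : ∀ β < p.alphap, ∃ s ∈ b, p.ht s = β

namespace IsBranch

variable {b c : Set Ordinal.{u}}

theorem subset_cone (hb : p.IsBranch b) {w : Ordinal.{u}} (hw : w ∈ b) :
    b ⊆ {t | p.cone w t} :=
  fun s hs => ⟨hb.subset hs, hb.comparable s hs w hw⟩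

theorem mem_of_lt_or_eq (hb : p.IsBranch b) {s t : Ordinal.{u}}
    (ht : t ∈ b) (h : p.lt s t ∨ s = t) : s ∈ b := by
  rcases h with h | rfl
  exacts [hb.mem_of_lt t ht s h, ht]

variable [IsTrans Ordinal.{u} p.lt]

theorem mem_of_subset_cone (hb : p.IsBranch b) {z : Ordinal.{u}} (hz : p.ht z < p.alphap)
    (h : b ⊆ {t | p.cone z t}) : z ∈ b := by
  obtain ⟨s, hs, hsz⟩ := hb.exists_ht_eq _ hz
  rwa [← eq_of_ht_eq (h hs).2 hsz]

theorem image (hb : p.IsBranch b) {f : Ordinal.{u} → Ordinal.{u}} {w z : Ordinal.{u}}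
    (hf : p.IsConeIso f w z) (hw : w ∈ b) : p.IsBranch (f '' b) where
  subset := by
    rintro _ ⟨s, hs, rfl⟩
    exact (hf.bijOn.mapsTo (hb.subset_cone hw hs)).1
  comparable := by
    rintro _ ⟨s, hs, rfl⟩ _ ⟨t, ht, rfl⟩
    have hcs := hb.subset_cone hw hs
    have hct := hb.subset_cone hw ht
    rcases hb.comparable s hs t ht with h | rfl | h
    · exact Or.inl ((hf.lt_iff hcs hct).1 h)
    · exact Or.inr (Or.inl rfl)
    · exact Or.inr (Or.inr ((hf.lt_iff hct hcs).1 h))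
  mem_of_lt := by
    rintro _ ⟨s, hs, rfl⟩ r hr
    have hcs := hb.subset_cone hw hs
    obtain ⟨t, hct, rfl⟩ := hf.bijOn.surjOn (cone_of_lt hr (hf.bijOn.mapsTo hcs))
    exact ⟨t, hb.mem_of_lt s hs t ((hf.lt_iff hct hcs).2 hr), rfl⟩
  exists_ht_eq β hβ := by
    obtain ⟨s, hs, rfl⟩ := hb.exists_ht_eq β hβ
    exact ⟨f s, mem_image_of_mem f hs, hf.ht_apply (hb.subset_cone hw hs)⟩

theorem preimage (hc : p.IsBranch c) {f : Ordinal.{u} → Ordinal.{u}} {w z : Ordinal.{u}}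
    (hf : p.IsConeIso f w z) (hz : z ∈ c) : p.IsBranch ({t | p.cone w t} ∩ f ⁻¹' c) where
  subset _ ht := ht.1.1
  comparable := by
    rintro s ⟨hcs, hs⟩ t ⟨hct, ht⟩
    rcases hc.comparable _ hs _ ht with h | h | h
    · exact Or.inl ((hf.lt_iff hcs hct).2 h)
    · exact Or.inr (Or.inl (hf.bijOn.injOn hcs hct h))
    · exact Or.inr (Or.inr ((hf.lt_iff hct hcs).2 h))
  mem_of_lt := by
    rintro t ⟨hct, ht⟩ s hst
    have hcs := cone_of_lt hst hct
    exact ⟨hcs, hc.mem_of_lt _ ht _ ((hf.lt_iff hcs hct).1 hst)⟩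
  exists_ht_eq β hβ := by
    obtain ⟨s, hs, rfl⟩ := hc.exists_ht_eq β hβ
    obtain ⟨t, hct, rfl⟩ := hf.bijOn.surjOn (hc.subset_cone hz hs)
    exact ⟨t, ⟨hct, hs⟩, (hf.ht_apply hct).symm⟩

theorem isWellOrder (hb : p.IsBranch b) :
    IsWellOrder {s // s ∈ b} (fun u v => p.lt u.1 v.1) where
  trichotomous u v huv hvu :=
    Subtype.ext (((hb.comparable u.1 u.2 v.1 v.2).resolve_left huv).resolve_right hvu)
  wf := Subrelation.wf (fun h => ht_lt_ht h) (InvImage.wf (fun u : {s // s ∈ b} => p.ht u.1)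
    Ordinal.lt_wf)

theorem typein_eq (hb : p.IsBranch b) {s : Ordinal.{u}}
    (hs : s ∈ b) :
    @Ordinal.typein {s // s ∈ b} (fun u v => p.lt u.1 v.1) hb.isWellOrder ⟨s, hs⟩ = p.ht s := by
  let _ := hb.isWellOrder
  let _ := p.wo s
  rw [← Ordinal.type_subrel]
  exact Ordinal.type_eq.2 ⟨⟨⟨fun u => ⟨u.1.1, u.2⟩, fun v => ⟨⟨v.1, hb.mem_of_lt s hs v.1 v.2⟩,
    v.2⟩, fun _ => rfl, fun _ => rfl⟩, Iff.rfl⟩⟩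

theorem type_eq_alphap (hb : p.IsBranch b)
    (hht : ∀ t ∈ p.tp, p.ht t < p.alphap) :
    @Ordinal.type {s // s ∈ b} (fun u v => p.lt u.1 v.1) hb.isWellOrder = p.alphap := by
  let _ := hb.isWellOrder
  rcases lt_trichotomy (Ordinal.type fun (u v : {s // s ∈ b}) => p.lt u.1 v.1) p.alphap with
    h | h | h
  · obtain ⟨s, hs, hhs⟩ := hb.exists_ht_eq _ h
    have := Ordinal.typein_lt_type (fun (u v : {s // s ∈ b}) => p.lt u.1 v.1) ⟨s, hs⟩
    rw [hb.typein_eq hs, hhs] at this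
    exact absurd this (lt_irrefl _)
  · exact h
  · obtain ⟨⟨s, hs⟩, h'⟩ := Ordinal.typein_surj (fun (u v : {s // s ∈ b}) => p.lt u.1 v.1) h
    rw [hb.typein_eq hs] at h'
    exact absurd (h' ▸ hht s (hb.subset hs)) (lt_irrefl _)

end IsBranch

namespace IsConeIso

variable {f : Ordinal.{u} → Ordinal.{u}} {w z : Ordinal.{u}} {b c : Set Ordinal.{u}}

theorem image_inter_preimage_of_isBranch (hf : p.IsConeIso f w z) (hc : p.IsBranch c)
    (hz : z ∈ c) : f '' ({t | p.cone w t} ∩ f ⁻¹' c) = c := by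
  rw [image_inter_preimage, hf.bijOn.image_eq, inter_eq_right.2 (hc.subset_cone hz)]

variable [IsTrans Ordinal.{u} p.lt]

theorem mem_image_of_isBranch (hht : ∀ t ∈ p.tp, p.ht t < p.alphap) (hf : p.IsConeIso f w z)
    (hb : p.IsBranch b) (hw : w ∈ b) : z ∈ f '' b :=
  (hb.image hf hw).mem_of_subset_cone (hht z (hf.mem_right (hb.subset hw)))
    (hf.bijOn.mapsTo.mono_left (hb.subset_cone hw)).image_subset

theorem mem_preimage_of_isBranch (hht : ∀ t ∈ p.tp, p.ht t < p.alphap)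
    (hf : p.IsConeIso f w z) (hc : p.IsBranch c) (hz : z ∈ c) :
    w ∈ {t | p.cone w t} ∩ f ⁻¹' c :=
  (hc.preimage hf hz).mem_of_subset_cone (hht w (hf.mem_left (hc.subset hz))) inter_subset_left

end IsConeIso

theorem isBranch_of_chain [IsTrans Ordinal.{u} p.lt] (s : ℕ → Ordinal.{u}) (hs : ∀ n, s n ∈ p.tp)
    (hstep : ∀ n, p.lt (s n) (s (n + 1)) ∨ s n = s (n + 1))
    (hcof : ∀ β < p.alphap, ∃ n, β ≤ p.ht (s n)) :
    p.IsBranch {r | ∃ n, p.lt r (s n) ∨ r = s n} := by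
  have hmono : ∀ m n, m ≤ n → p.lt (s m) (s n) ∨ s m = s n := fun m n hmn => by
    induction n, hmn using Nat.le_induction with
    | base => exact Or.inr rfl
    | succ n _ ih => exact lt_or_eq_trans ih (hstep n)
  refine ⟨?_, ?_, ?_, fun β hβ => ?_⟩
  · rintro r ⟨n, h | rfl⟩
    exacts [(p.lt_mem _ _ h).1, hs n]
  · rintro r ⟨m, hr⟩ r' ⟨n, hr'⟩
    exact comparable_of_lt_or_eq (lt_or_eq_trans hr (hmono m (max m n) (le_max_left m n)))
      (lt_or_eq_trans hr' (hmono n (max m n) (le_max_right m n)))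
  · rintro r ⟨n, hr⟩ r' hr'
    exact ⟨n, lt_or_eq_trans (Or.inl hr') hr⟩
  · obtain ⟨n, hn⟩ := hcof β hβ
    rcases hn.lt_or_eq with h | h
    · obtain ⟨r, hr, rfl⟩ := exists_lt_ht_eq h
      exact ⟨r, ⟨n, Or.inl hr⟩, rfl⟩
    · exact ⟨s n, ⟨n, Or.inr rfl⟩, h.symm⟩

theorem exists_lt_or_eq_le_ht (hp : IsQCond p) {t : Ordinal.{u}} (ht : t ∈ p.tp)
    {β : Ordinal.{u + 1}} (hβ : β < p.alphap) :
    ∃ s ∈ p.tp, (p.lt t s ∨ t = s) ∧ β ≤ p.ht s := by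
  have := hp.isTrans
  rcases le_or_gt β (p.ht t) with h | h
  · exact ⟨t, ht, Or.inr rfl, h⟩
  obtain ⟨s, hs, rfl, hcmp⟩ := hp.2.2.2.2.2.1 t ht β hβ
  refine ⟨s, hs, ?_, le_rfl⟩
  rcases hcmp with h' | rfl | h'
  · exact absurd (ht_lt_ht h') h.not_gt
  · exact absurd h (lt_irrefl _)
  · exact Or.inl h'

theorem exists_isBranch_mem (hp : IsQCond p) {t : Ordinal.{u}} (ht : t ∈ p.tp) :
    ∃ b, p.IsBranch b ∧ t ∈ b := by
  have := hp.isTrans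
  -- `α_p` is countable, so climbing through an enumeration of it reaches every level in `ω` steps
  obtain ⟨f, hf⟩ :=
    (countable_Iio_alphap hp.tp_countable).exists_eq_range ⟨p.ht t, hp.ht_lt_alphap ht⟩
  have hf_lt : ∀ n, f n < p.alphap := fun n => (hf ▸ mem_range_self n : f n ∈ Iio p.alphap)
  choose! g hg_mem hg_lt hg_le using fun t (ht : t ∈ p.tp) β (hβ : β < p.alphap) =>
    exists_lt_or_eq_le_ht hp ht hβ
  let s : ℕ → Ordinal.{u} := fun n => Nat.rec t (fun n sn => g sn (f n)) n
  have hs : ∀ n, s n ∈ p.tp := fun n => Nat.rec ht (fun n ih => hg_mem _ ih _ (hf_lt n)) n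
  refine ⟨_, isBranch_of_chain s hs (fun n => hg_lt _ (hs n) _ (hf_lt n)) fun β hβ => ?_,
    0, Or.inr rfl⟩
  obtain ⟨n, rfl⟩ : β ∈ range f := hf ▸ hβ
  exact ⟨n + 1, hg_le _ (hs n) _ (hf_lt n)⟩

structure IsClosedBranchFamily (p : QPre.{u}) (B : Set (Set Ordinal.{u})) : Prop where
  isBranch : ∀ b ∈ B, p.IsBranch b
  exists_mem : ∀ t ∈ p.tp, ∃ b ∈ B, t ∈ b
  image_mem : ∀ ζ ∈ p.dp, ∀ {w z}, p.IsConeIso (p.pi ζ) w z →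
    ∀ b ∈ B, w ∈ b → p.pi ζ '' b ∈ B
  preimage_mem : ∀ ζ ∈ p.dp, ∀ {w z}, p.IsConeIso (p.pi ζ) w z →
    ∀ c ∈ B, z ∈ c → {t | p.cone w t} ∩ p.pi ζ ⁻¹' c ∈ B

theorem exists_countable_isClosedBranchFamily (hp : IsQCond p) :
    ∃ B, B.Countable ∧ p.IsClosedBranchFamily B := by
  have := hp.isTrans
  choose! br hbr hmem using fun t (ht : t ∈ p.tp) => exists_isBranch_mem hp ht
  have : Countable p.dp := hp.dp_countable.to_subtype
  have : Countable ↥(p.dp ×ˢ p.tp) := (hp.dp_countable.prod hp.tp_countable).to_subtype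
  let F : p.dp ⊕ ↥(p.dp ×ˢ p.tp) → Set Ordinal.{u} → Set Ordinal.{u} :=
    Sum.elim (fun ζ b => p.pi ζ '' b) fun ζw c => {t | p.cone ζw.1.2 t} ∩ p.pi ζw.1.1 ⁻¹' c
  refine ⟨{b ∈ closureUnder F (br '' p.tp) | p.IsBranch b},
    ((hp.tp_countable.image br).closureUnder).mono (sep_subset _ _),
    ⟨fun b hb => hb.2, fun t ht => ⟨br t, ⟨subset_closureUnder (mem_image_of_mem br ht),
      hbr t ht⟩, hmem t ht⟩, ?_, ?_⟩⟩
  · intro ζ hζ w z hf b hb hw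
    exact ⟨apply_mem_closureUnder (F := F) (Sum.inl ⟨ζ, hζ⟩) hb.1, hb.2.image hf hw⟩
  · intro ζ hζ w z hf c hc hz
    have hw : w ∈ p.tp := hf.mem_left (hc.2.subset hz)
    exact ⟨apply_mem_closureUnder (F := F) (Sum.inr ⟨(ζ, w), hζ, hw⟩) hc.1, hc.2.preimage hf hz⟩

/-- Labels `l ∈ E` index a new top level of the tree: `node l` is put above the branch
`branch l`, and `shift ζ` says how `π_ζ` acts on the labels. -/
structure LevelExtension (p : QPre.{u}) (L : Type v) where
  E : Set L
  branch : L → Set Ordinal.{u}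
  node : L → Ordinal.{u}
  shift : Ordinal.{u} → L → L
  countable : E.Countable
  isBranch : ∀ l ∈ E, p.IsBranch (branch l)
  exists_mem : ∀ t ∈ p.tp, ∃ l ∈ E, t ∈ branch l
  node_injOn : E.InjOn node
  mapsTo_node : MapsTo node E (Iio (Cardinal.aleph 1).ord \ p.tp)
  bijOn_shift : ∀ ζ ∈ p.dp, ∀ {w z}, p.IsConeIso (p.pi ζ) w z →
    BijOn (shift ζ) {l ∈ E | w ∈ branch l} {l ∈ E | z ∈ branch l}
  branch_shift : ∀ ζ ∈ p.dp, ∀ {w z}, p.IsConeIso (p.pi ζ) w z →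
    ∀ l ∈ E, w ∈ branch l → branch (shift ζ l) = p.pi ζ '' branch l

namespace LevelExtension

variable {L : Type v} (D : LevelExtension p L)

theorem node_not_mem {l : L} (hl : l ∈ D.E) : D.node l ∉ p.tp := (D.mapsTo_node hl).2

def lt (s t : Ordinal.{u}) : Prop :=
  p.lt s t ∨ ∃ l ∈ D.E, t = D.node l ∧ s ∈ D.branch l

open Classical in
noncomputable def pi (ζ a : Ordinal.{u}) : Ordinal.{u} :=
  if h : ∃ l ∈ D.E, a = D.node l then D.node (D.shift ζ h.choose) else p.pi ζ a

variable {D}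

theorem lt_iff_of_mem {s t : Ordinal.{u}} (ht : t ∈ p.tp) : D.lt s t ↔ p.lt s t := by
  refine ⟨?_, Or.inl⟩
  rintro (h | ⟨l, hl, rfl, -⟩)
  exacts [h, absurd ht (D.node_not_mem hl)]

theorem lt_node_iff {l : L} (hl : l ∈ D.E) {s : Ordinal.{u}} :
    D.lt s (D.node l) ↔ s ∈ D.branch l := by
  refine ⟨?_, fun hs => Or.inr ⟨l, hl, rfl, hs⟩⟩
  rintro (h | ⟨l', hl', he, hs⟩)
  · exact absurd (p.lt_mem _ _ h).2 (D.node_not_mem hl)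
  · rwa [D.node_injOn hl hl' he]

theorem not_node_lt {l : L} (hl : l ∈ D.E) (r : Ordinal.{u}) : ¬ D.lt (D.node l) r := by
  rintro (h | ⟨l', hl', -, hmem⟩)
  · exact D.node_not_mem hl (p.lt_mem _ _ h).1
  · exact D.node_not_mem hl ((D.isBranch l' hl').subset hmem)

theorem lt_mem {s t : Ordinal.{u}} (h : D.lt s t) :
    s ∈ p.tp ∪ D.node '' D.E ∧ t ∈ p.tp ∪ D.node '' D.E := by
  rcases h with h | ⟨l, hl, rfl, hs⟩
  · exact ⟨Or.inl (p.lt_mem _ _ h).1, Or.inl (p.lt_mem _ _ h).2⟩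
  · exact ⟨Or.inl ((D.isBranch l hl).subset hs), Or.inr (mem_image_of_mem _ hl)⟩

theorem pi_of_mem (ζ : Ordinal.{u}) {a : Ordinal.{u}} (ha : a ∈ p.tp) : D.pi ζ a = p.pi ζ a :=
  dif_neg fun ⟨_, hl, he⟩ => D.node_not_mem hl (he ▸ ha)

theorem pi_node (ζ : Ordinal.{u}) {l : L} (hl : l ∈ D.E) :
    D.pi ζ (D.node l) = D.node (D.shift ζ l) := by
  have h : ∃ l' ∈ D.E, D.node l = D.node l' := ⟨l, hl, rfl⟩
  rw [pi, dif_pos h, D.node_injOn h.choose_spec.1 hl h.choose_spec.2.symm]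

theorem lt_trans [IsTrans Ordinal.{u} p.lt] {a b c : Ordinal.{u}} (hab : D.lt a b)
    (hbc : D.lt b c) : D.lt a c := by
  rcases hbc with hbc | ⟨l, hl, rfl, hb⟩
  · exact Or.inl (trans_of p.lt ((lt_iff_of_mem (p.lt_mem _ _ hbc).1).1 hab) hbc)
  · have hab := (lt_iff_of_mem ((D.isBranch l hl).subset hb)).1 hab
    exact (lt_node_iff hl).2 ((D.isBranch l hl).mem_of_lt _ hb _ hab)

theorem predecessors_isWellOrder [IsTrans Ordinal.{u} p.lt] (t : Ordinal.{u}) :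
    IsWellOrder {s // D.lt s t} (fun a b => D.lt a.1 b.1) := by
  by_cases ht : t ∈ p.tp
  · let _ := p.wo t
    exact (subrelIsoOfIff (r := D.lt) (r' := p.lt) (fun _ => lt_iff_of_mem ht) fun _ b _ hb =>
      lt_iff_of_mem (p.lt_mem _ _ ((lt_iff_of_mem ht).1 hb)).1).toRelEmbedding.isWellOrder
  by_cases hnode : ∃ l ∈ D.E, t = D.node l
  · obtain ⟨l, hl, rfl⟩ := hnode
    let _ := (D.isBranch l hl).isWellOrder
    exact (subrelIsoOfIff (r := D.lt) (r' := p.lt) (fun _ => lt_node_iff hl) fun _ b _ hb =>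
      lt_iff_of_mem ((D.isBranch l hl).subset ((lt_node_iff hl).1 hb))).toRelEmbedding.isWellOrder
  · have : IsEmpty {s // D.lt s t} := ⟨fun ⟨_, h⟩ => by
      rcases h with h | ⟨l, hl, he, -⟩
      exacts [ht (p.lt_mem _ _ h).2, hnode ⟨l, hl, he⟩]⟩
    exact { trichotomous := fun a => isEmptyElim a, wf := ⟨fun a => isEmptyElim a⟩ }

variable (D)

noncomputable def toQPre (htr : IsTrans Ordinal.{u} p.lt) : QPre.{u} where
  tp := p.tp ∪ D.node '' D.E
  lt := D.lt
  dp := p.dp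
  pi := D.pi
  lt_mem _ _ := lt_mem
  wo := predecessors_isWellOrder

variable {D}

section Trans

variable {htr : IsTrans Ordinal.{u} p.lt}

theorem ht_toQPre_of_mem {t : Ordinal.{u}} (ht : t ∈ p.tp) : (D.toQPre htr).ht t = p.ht t :=
  @Ordinal.type_eq _ _ _ _ ((D.toQPre htr).wo t) (p.wo t) |>.2
    ⟨subrelIsoOfIff (r := D.lt) (r' := p.lt) (fun _ => lt_iff_of_mem ht) fun _ _ _ hb =>
      lt_iff_of_mem (p.lt_mem _ _ ((lt_iff_of_mem ht).1 hb)).1⟩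

theorem cone_toQPre_iff_of_mem {w t : Ordinal.{u}} (hw : w ∈ p.tp) (ht : t ∈ p.tp) :
    (D.toQPre htr).cone w t ↔ p.cone w t := by
  simp only [cone, toQPre, lt_iff_of_mem hw, lt_iff_of_mem ht, mem_union, ht, true_or]

theorem cone_toQPre_node_iff {w : Ordinal.{u}} (hw : w ∈ p.tp) {l : L} (hl : l ∈ D.E) :
    (D.toQPre htr).cone w (D.node l) ↔ w ∈ D.branch l := by
  refine ⟨fun ⟨_, h⟩ => ?_, fun h => ⟨Or.inr (mem_image_of_mem _ hl), Or.inr (Or.inr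
    ((lt_node_iff hl).2 h))⟩⟩
  rcases h with h | h | h
  · exact absurd h (not_node_lt hl w)
  · exact absurd (h ▸ hw) (D.node_not_mem hl)
  · exact (lt_node_iff hl).1 h

theorem cone_toQPre_cases {w t : Ordinal.{u}} (hw : w ∈ p.tp)
    (h : (D.toQPre htr).cone w t) :
    p.cone w t ∨ ∃ l ∈ D.E, w ∈ D.branch l ∧ D.node l = t := by
  rcases h.1 with ht | ⟨l, hl, rfl⟩
  · exact Or.inl ((cone_toQPre_iff_of_mem hw ht).1 h)
  · exact Or.inr ⟨l, hl, (cone_toQPre_node_iff hw hl).1 h, rfl⟩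

variable {ζ w z : Ordinal.{u}}

theorem bijOn_pi_toQPre (hζ : ζ ∈ p.dp) (hf : p.IsConeIso (p.pi ζ) w z) (hw : w ∈ p.tp) :
    BijOn (D.pi ζ) {t | (D.toQPre htr).cone w t} {t | (D.toQPre htr).cone z t} := by
  have hz : z ∈ p.tp := hf.mem_right hw
  have hshift := D.bijOn_shift ζ hζ hf
  have hold : ∀ {t}, p.cone w t → D.pi ζ t ∈ p.tp := fun ht =>
    (pi_of_mem ζ ht.1).symm ▸ (hf.bijOn.mapsTo ht).1
  have hnew : ∀ {l}, l ∈ D.E → w ∈ D.branch l → D.pi ζ (D.node l) ∉ p.tp := fun hl hwl =>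
    (pi_node ζ hl).symm ▸ D.node_not_mem (hshift.mapsTo ⟨hl, hwl⟩).1
  refine ⟨fun t ht => ?_, fun s hs t ht hst => ?_, fun s hs => ?_⟩
  · rcases cone_toQPre_cases hw ht with ht | ⟨l, hl, hwl, rfl⟩
    · rw [pi_of_mem ζ ht.1]
      exact (cone_toQPre_iff_of_mem hz (hf.bijOn.mapsTo ht).1).2 (hf.bijOn.mapsTo ht)
    · obtain ⟨hl', hzl⟩ := hshift.mapsTo ⟨hl, hwl⟩
      rw [pi_node ζ hl]
      exact (cone_toQPre_node_iff hz hl').2 hzl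
  · rcases cone_toQPre_cases hw hs with hs | ⟨l, hl, hwl, rfl⟩ <;>
      rcases cone_toQPre_cases hw ht with ht | ⟨l', hl', hwl', rfl⟩
    · rw [pi_of_mem ζ hs.1, pi_of_mem ζ ht.1] at hst
      exact hf.bijOn.injOn hs ht hst
    · exact absurd (hst ▸ hold hs) (hnew hl' hwl')
    · exact absurd (hst ▸ hold ht) (hnew hl hwl)
    · rw [pi_node ζ hl, pi_node ζ hl'] at hst
      exact congrArg D.node (hshift.injOn ⟨hl, hwl⟩ ⟨hl', hwl'⟩ (D.node_injOn
        (hshift.mapsTo ⟨hl, hwl⟩).1 (hshift.mapsTo ⟨hl', hwl'⟩).1 hst))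
  · rcases cone_toQPre_cases hz hs with hs | ⟨l, hl, hzl, rfl⟩
    · obtain ⟨t, ht, rfl⟩ := hf.bijOn.surjOn hs
      exact ⟨t, (cone_toQPre_iff_of_mem hw ht.1).2 ht, pi_of_mem ζ ht.1⟩
    · obtain ⟨l', ⟨hl', hwl'⟩, rfl⟩ := hshift.surjOn ⟨hl, hzl⟩
      exact ⟨D.node l', (cone_toQPre_node_iff hw hl').2 hwl', pi_node ζ hl'⟩

theorem lt_pi_toQPre_iff (hζ : ζ ∈ p.dp) (hf : p.IsConeIso (p.pi ζ) w z) (hw : w ∈ p.tp)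
    {s t : Ordinal.{u}} (hs : (D.toQPre htr).cone w s) (ht : (D.toQPre htr).cone w t) :
    D.lt s t ↔ D.lt (D.pi ζ s) (D.pi ζ t) := by
  rcases cone_toQPre_cases hw hs with hs | ⟨l, hl, hwl, rfl⟩
  · rcases cone_toQPre_cases hw ht with ht | ⟨l, hl, hwl, rfl⟩
    · rw [pi_of_mem ζ hs.1, pi_of_mem ζ ht.1, lt_iff_of_mem ht.1,
        lt_iff_of_mem (hf.bijOn.mapsTo ht).1]
      exact hf.lt_iff hs ht
    · rw [pi_of_mem ζ hs.1, pi_node ζ hl, lt_node_iff hl,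
        lt_node_iff ((D.bijOn_shift ζ hζ hf).mapsTo ⟨hl, hwl⟩).1, D.branch_shift ζ hζ hf l hl hwl]
      exact (hf.bijOn.injOn.mem_image_iff ((D.isBranch l hl).subset_cone hwl) hs).symm
  · rw [pi_node ζ hl]
    exact iff_of_false (not_node_lt hl t)
      (not_node_lt ((D.bijOn_shift ζ hζ hf).mapsTo ⟨hl, hwl⟩).1 _)

theorem isConeIso_toQPre (hζ : ζ ∈ p.dp) (hf : p.IsConeIso (p.pi ζ) w z) (hw : w ∈ p.tp) :
    (D.toQPre htr).IsConeIso ((D.toQPre htr).pi ζ) w z :=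
  have h := D.bijOn_pi_toQPre (htr := htr) hζ hf hw
  ⟨h.mapsTo, fun _ hs => h.surjOn hs, fun _ _ hs ht => h.injOn hs ht,
    fun _ _ => lt_pi_toQPre_iff hζ hf hw⟩

end Trans

theorem ht_toQPre_node (hp : IsQCond p) {l : L} (hl : l ∈ D.E) :
    (D.toQPre hp.isTrans).ht (D.node l) = p.alphap := by
  have := hp.isTrans
  have hb := D.isBranch l hl
  rw [← hb.type_eq_alphap fun _ => hp.ht_lt_alphap]
  exact @Ordinal.type_eq _ _ _ _ ((D.toQPre hp.isTrans).wo _) hb.isWellOrder |>.2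
    ⟨subrelIsoOfIff (r := D.lt) (r' := p.lt) (fun _ => lt_node_iff hl) fun _ _ _ hs =>
      lt_iff_of_mem (hb.subset ((lt_node_iff hl).1 hs))⟩

theorem alphap_toQPre (hp : IsQCond p) (hE : D.E.Nonempty) :
    (D.toQPre hp.isTrans).alphap = p.alphap + 1 := by
  refine alphap_eq_of_image_ht_eq ?_
  rw [Iio_add_one_eq_Iic]
  ext α
  constructor
  · rintro ⟨t, ht | ⟨l, hl, rfl⟩, rfl⟩
    · exact (ht_toQPre_of_mem ht ▸ hp.ht_lt_alphap ht).le
    · exact (ht_toQPre_node hp hl).le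
  · intro (hα : α ≤ p.alphap)
    rcases hα.lt_or_eq with hα | rfl
    · obtain ⟨t, ht, rfl⟩ := exists_ht_eq_of_lt_alphap hα
      exact ⟨t, Or.inl ht, ht_toQPre_of_mem ht⟩
    · obtain ⟨l, hl⟩ := hE
      exact ⟨D.node l, Or.inr (mem_image_of_mem _ hl), ht_toQPre_node hp hl⟩

theorem exists_toQPre_ht_eq_comparable (hp : IsQCond p) {t : Ordinal.{u}}
    (ht : t ∈ (D.toQPre hp.isTrans).tp) {β : Ordinal.{u + 1}} (hβ : β ≤ p.alphap) :
    ∃ s ∈ (D.toQPre hp.isTrans).tp, (D.toQPre hp.isTrans).ht s = β ∧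
      (D.lt s t ∨ s = t ∨ D.lt t s) := by
  rcases hβ.lt_or_eq with hβ | rfl
  · rcases ht with ht | ⟨l, hl, rfl⟩
    · obtain ⟨s, hs, rfl, hcmp⟩ := hp.2.2.2.2.2.1 t ht β hβ
      refine ⟨s, Or.inl hs, ht_toQPre_of_mem hs, ?_⟩
      rcases hcmp with h | h | h
      exacts [Or.inl (Or.inl h), Or.inr (Or.inl h), Or.inr (Or.inr (Or.inl h))]
    · obtain ⟨s, hs, rfl⟩ := (D.isBranch l hl).exists_ht_eq β hβ
      have hs' := (D.isBranch l hl).subset hs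
      exact ⟨s, Or.inl hs', ht_toQPre_of_mem hs', Or.inl ((lt_node_iff hl).2 hs)⟩
  · rcases ht with ht | ⟨l, hl, rfl⟩
    · obtain ⟨l, hl, htl⟩ := D.exists_mem t ht
      exact ⟨D.node l, Or.inr (mem_image_of_mem _ hl), ht_toQPre_node hp hl,
        Or.inr (Or.inr ((lt_node_iff hl).2 htl))⟩
    · exact ⟨D.node l, Or.inr (mem_image_of_mem _ hl), ht_toQPre_node hp hl, Or.inr (Or.inl rfl)⟩

theorem isQCond_toQPre (hp : IsQCond p) (hE : D.E.Nonempty) :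
    IsQCond (D.toQPre hp.isTrans) := by
  have := hp.isTrans
  have hα := alphap_toQPre hp hE
  refine ⟨?_, hp.tp_countable.union (D.countable.image _), ?_, fun _ _ _ => lt_trans, ?_,
    fun t ht β hβ => ?_, hp.2.2.2.2.2.2.1, hp.dp_countable, fun ζ hζ => ?_⟩
  · rintro a (ha | ⟨l, hl, rfl⟩)
    exacts [hp.1 ha, (D.mapsTo_node hl).1]
  · rintro a (ha | ⟨l, hl, rfl⟩) h
    exacts [hp.2.2.1 a ha ((lt_iff_of_mem ha).1 h), not_node_lt hl _ h]
  · rintro t (ht | ⟨l, hl, rfl⟩) <;> rw [hα]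
    · exact (ht_toQPre_of_mem ht).trans_lt ((hp.ht_lt_alphap ht).trans (lt_add_one _))
    · exact (ht_toQPre_node hp hl).trans_lt (lt_add_one _)
  · exact exists_toQPre_ht_eq_comparable hp ht (Order.lt_add_one_iff.1 (hα ▸ hβ))
  · obtain ⟨w, hw, z, hz, hwz, hf⟩ := hp.2.2.2.2.2.2.2.2 ζ hζ
    exact ⟨w, Or.inl hw, z, Or.inl hz, by rw [ht_toQPre_of_mem hw, ht_toQPre_of_mem hz, hwz],
      isConeIso_toQPre hζ hf hw⟩

theorem toQPre_le (hp : IsQCond p) : QLe (D.toQPre hp.isTrans) p := by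
  refine ⟨?_, fun _ _ _ hy => (lt_iff_of_mem hy).symm, subset_rfl,
    fun ζ _ _ ht => pi_of_mem ζ ht⟩
  ext t
  refine ⟨fun ht => ⟨Or.inl ht, (ht_toQPre_of_mem ht).trans_lt (hp.ht_lt_alphap ht)⟩, ?_⟩
  rintro ⟨ht | ⟨l, hl, rfl⟩, hlt⟩
  · exact ht
  · exact absurd (ht_toQPre_node hp hl ▸ hlt) (lt_irrefl _)

end LevelExtension

theorem exists_levelExtension_shift_ne (hp : IsQCond p) (ξ x : Ordinal.{u}) :
    ∃ D : LevelExtension p (Set Ordinal.{u} × Bool),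
      ∀ l, x ∈ D.branch l → ∀ ζ ≠ ξ, D.shift ξ l ≠ D.shift ζ l := by
  classical
  have := hp.isTrans
  have hht : ∀ t ∈ p.tp, p.ht t < p.alphap := fun _ => hp.ht_lt_alphap
  obtain ⟨B, hBc, hB⟩ := exists_countable_isClosedBranchFamily hp
  obtain ⟨node, hinj, hmaps⟩ :=
    exists_injOn_mapsTo_Iio_omega_one_diff (hBc.prod (countable_univ (α := Bool))) hp.tp_countable
  let twist (ζ : Ordinal.{u}) (b : Set Ordinal.{u}) : Bool := decide (ζ = ξ ∧ x ∈ b)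
  refine ⟨{
    E := B ×ˢ univ
    branch := Prod.fst
    node := node
    shift := fun ζ l => (p.pi ζ '' l.1, l.2 ^^ twist ζ l.1)
    countable := hBc.prod (countable_univ (α := Bool))
    isBranch := fun l hl => hB.isBranch l.1 hl.1
    exists_mem := fun t ht =>
      let ⟨b, hb, htb⟩ := hB.exists_mem t ht
      ⟨(b, true), ⟨hb, mem_univ _⟩, htb⟩
    node_injOn := hinj
    mapsTo_node := hmaps
    bijOn_shift := fun ζ hζ w z hf => ⟨fun l hl => ?_, fun l hl l' hl' h => ?_, fun l hl => ?_⟩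
    branch_shift := fun _ _ _ _ _ _ _ _ => rfl }, ?_⟩
  · exact ⟨⟨hB.image_mem ζ hζ hf l.1 hl.1.1 hl.2, mem_univ _⟩,
      hf.mem_image_of_isBranch hht (hB.isBranch l.1 hl.1.1) hl.2⟩
  · obtain ⟨h₁, h₂⟩ := Prod.mk.inj h
    have hb : l.1 = l'.1 := (hf.bijOn.injOn.image_eq_image_iff
      ((hB.isBranch _ hl.1.1).subset_cone hl.2) ((hB.isBranch _ hl'.1.1).subset_cone hl'.2)).1 h₁
    rw [hb, Bool.xor_left_inj] at h₂
    exact Prod.ext hb h₂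
  · obtain ⟨c, j⟩ := l
    obtain ⟨⟨hc, -⟩, hz⟩ := hl
    let b := {t | p.cone w t} ∩ p.pi ζ ⁻¹' c
    refine ⟨(b, j ^^ twist ζ b), ⟨⟨hB.preimage_mem ζ hζ hf c hc hz, mem_univ _⟩,
      hf.mem_preimage_of_isBranch hht (hB.isBranch c hc) hz⟩, ?_⟩
    simp only [hf.image_inter_preimage_of_isBranch (hB.isBranch c hc) hz, Bool.xor_assoc,
      Bool.xor_self, Bool.xor_false, b]
  · rintro ⟨b, i⟩ (hx : x ∈ b) ζ hζ h
    simpa [twist, hx, hζ] using congrArg Prod.snd h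

end QPre

theorem Q_isomorphisms_eventually_disagree_general (p : QPre.{u}) (hp : IsQCond p)
    (ξ η : Ordinal.{u}) (hξ : ξ ∈ p.dp) (hη : η ∈ p.dp) (hne : ξ ≠ η)
    (xξ yξ xη yη : Ordinal.{u})
    (hξiso : p.ht xξ = p.ht yξ ∧ p.IsConeIso (p.pi ξ) xξ yξ)
    (hηiso : p.ht xη = p.ht yη ∧ p.IsConeIso (p.pi η) xη yη)
    (x : Ordinal.{u}) (hx : x ∈ p.tp)
    (hxξx : p.lt xξ x ∨ xξ = x) (hxηx : p.lt xη x ∨ xη = x) :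
    ∃ q : QPre.{u}, IsQCond q ∧ QLe q p ∧
      ∃ α : Ordinal.{u + 1}, p.ht x < α ∧ α < q.alphap ∧
        ∀ y ∈ q.tp, q.ht y = α → q.lt x y → q.pi ξ y ≠ q.pi η y := by
  obtain ⟨D, hD⟩ := QPre.exists_levelExtension_shift_ne hp ξ x
  have hE : D.E.Nonempty := let ⟨l, hl, _⟩ := D.exists_mem x hx; ⟨l, hl⟩
  refine ⟨D.toQPre hp.isTrans, D.isQCond_toQPre hp hE, D.toQPre_le hp, p.alphap,
    hp.ht_lt_alphap hx, (D.alphap_toQPre hp hE).symm ▸ lt_add_one _, ?_⟩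
  rintro y (hy | ⟨l, hl, rfl⟩) hyα hxy
  · exact absurd (D.ht_toQPre_of_mem hy ▸ hyα) (hp.ht_lt_alphap hy).ne
  have hxl : x ∈ D.branch l := (D.lt_node_iff hl).1 hxy
  have hshift_mem {ζ xζ yζ : Ordinal.{u}} (hζ : ζ ∈ p.dp) (hf : p.IsConeIso (p.pi ζ) xζ yζ)
      (hxζx : p.lt xζ x ∨ xζ = x) : D.shift ζ l ∈ D.E :=
    ((D.bijOn_shift ζ hζ hf).mapsTo ⟨hl, (D.isBranch l hl).mem_of_lt_or_eq hxl hxζx⟩).1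
  change D.pi ξ (D.node l) ≠ D.pi η (D.node l)
  rw [D.pi_node ξ hl, D.pi_node η hl]
  exact (D.node_injOn.ne_iff (hshift_mem hξ hξiso.2 hxξx) (hshift_mem hη hηiso.2 hxηx)).2
    (hD l hxl η hne.symm)

/-- Let `p ∈ Q`, let `ξ ≠ η` be in `D_p`, with `π^p_ξ` a tree isomorphism from
the cone of `x_ξ` onto the cone of `y_ξ` and `π^p_η` a tree isomorphism from
the cone of `x_η` onto the cone of `y_η`, and let `x ∈ T_p` be above both
`x_ξ` and `x_η`.  Then there are a condition `q ≤ p` and an ordinal `α` with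
`ht(x) < α < α_q` such that `π^q_ξ(y) ≠ π^q_η(y)` for every `y ∈ T_q` of
height `α` lying above `x`. -/
theorem Q_isomorphisms_eventually_disagree (p : QPre.{u}) (hp : IsQCond p)
    (ξ η : Ordinal.{u}) (hξ : ξ ∈ p.dp) (hη : η ∈ p.dp) (hne : ξ ≠ η)
    (xξ yξ xη yη : Ordinal.{u})
    (hxξ : xξ ∈ p.tp) (hyξ : yξ ∈ p.tp) (hxη : xη ∈ p.tp) (hyη : yη ∈ p.tp)
    (hξiso : p.ht xξ = p.ht yξ ∧ p.IsConeIso (p.pi ξ) xξ yξ)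
    (hηiso : p.ht xη = p.ht yη ∧ p.IsConeIso (p.pi η) xη yη)
    (x : Ordinal.{u}) (hx : x ∈ p.tp)
    (hxξx : p.lt xξ x ∨ xξ = x) (hxηx : p.lt xη x ∨ xη = x) :
    ∃ q : QPre.{u}, IsQCond q ∧ QLe q p ∧
      ∃ α : Ordinal.{u + 1}, p.ht x < α ∧ α < q.alphap ∧
        ∀ y ∈ q.tp, q.ht y = α → q.lt x y → q.pi ξ y ≠ q.pi η y :=
  Q_isomorphisms_eventually_disagree_general p hp ξ η hξ hη hne xξ yξ xη yη hξiso hηiso x hx hxξx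
    hxηx
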